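/- arXiv:1212.2319 — 3 statements merged into one kernel-verified Lean document; each statement's English description precedes it below -/
import Mathlib

section
/- Let K be a field of characteristic zero and let A, B, C, D, G : ℤ → K with D(n) ≠ 0 for all n. Define ρ(n) = −G(n)/D(n), θ₀(n) = 1, θ₁(n) = −(B(n)ρ(n+1) + C(n))/D(n), and for j ≥ 0, θ_{j+2}(n) = −(1/D(n))·[ A(n)ρ(n+1)ρ(n+2) Σ_{i+k+l=j, i,k,l≥0} θ_i(n+2)θ_k(n+1)θ_l(n) + B(n)ρ(n+1) Σ_{i=0}^{j+1} θ_i(n+1)θ_{j+1−i}(n) + C(n)θ_{j+1}(n) ]. Then for every n the formal power series θ(n) := ε·ρ(n)·(1 + Σ_{j≥1} θ_j(n) ε^j) ∈ K⟦ε⟧ satisfies the third-order discrete Riccati equation A(n)·θ(n+2)·θ(n+1)·θ(n) + B(n)·θ(n+1)·θ(n) + (ε·C(n) + D(n))·θ(n) + ε·G(n) = 0 in K⟦ε⟧. -/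
/-!
Write `Θ(n) = ε ρ(n) S(n)` with `S(n) = Σ_j θ_j(n) ε^j`. Since `G = -ρ D`, the Riccati equation
is `ε ρ(n)` times
`D S(n) + ε (C S(n) + B ρ(n+1) S(n+1) S(n) + ε A ρ(n+1) ρ(n+2) S(n+2) S(n+1) S(n)) = D`,
and the coefficients of `ε⁰`, `ε¹` and `ε^{j+2}` of this identity are exactly `θ₀ = 1`, the
formula for `θ₁` and the recursion for `θ_{j+2}`, each multiplied by `D(n)`.
-/

namespace PowerSeries

open Finset

variable {R : Type*} [CommRing R]

theorem coeff_mk_mul_eq_sum_range (f : ℕ → R) (g : R⟦X⟧) (m : ℕ) :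
    coeff m (mk f * g) = ∑ i ∈ range (m + 1), f i * coeff (m - i) g := by
  rw [coeff_mul, Finset.Nat.sum_antidiagonal_eq_sum_range_succ_mk]
  simp

theorem coeff_mk_mul_mk (u v : ℕ → R) (m : ℕ) :
    coeff m (mk u * mk v) = ∑ i ∈ range (m + 1), u i * v (m - i) := by
  simp only [coeff_mk_mul_eq_sum_range, coeff_mk]

theorem coeff_mk_mul_mk_mul_mk (u v w : ℕ → R) (m : ℕ) :
    coeff m (mk u * (mk v * mk w)) =
      ∑ i ∈ range (m + 1), ∑ k ∈ range (m - i + 1), u i * v k * w (m - i - k) := by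
  simp only [coeff_mk_mul_eq_sum_range, coeff_mk, mul_sum, mul_assoc]

theorem C_mul_mk_add_X_mul_eq_C (a b c d : R) (u v w : ℕ → R)
    (h0 : d * w 0 = d) (h1 : d * w 1 + c * w 0 + b * (v 0 * w 0) = 0)
    (h : ∀ j, d * w (j + 2) + c * w (j + 1)
      + b * ∑ i ∈ range (j + 2), v i * w (j + 1 - i)
      + a * ∑ i ∈ range (j + 1), ∑ k ∈ range (j - i + 1), u i * v k * w (j - i - k) = 0) :
    C d * mk w + X * (C c * mk w + C b * (mk v * mk w) + X * (C a * (mk u * (mk v * mk w))))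
      = C d := by
  ext k
  rcases k with _ | _ | j
  · simpa using h0
  · simpa [coeff_C, coeff_mk_mul_mk, add_assoc] using h1
  · simp only [map_add, coeff_C_mul, coeff_succ_X_mul, coeff_mk, coeff_mk_mul_mk,
      coeff_mk_mul_mk_mul_mk, coeff_C]
    simpa [add_assoc] using h j

theorem mk_if_eq_zero_eq_X_mul (f : ℕ → R) :
    mk (fun k => if k = 0 then 0 else f (k - 1)) = X * mk f := by
  ext (_ | k) <;> simp [coeff_succ_X_mul]

end PowerSeries

open PowerSeries

theorem statement3_general {K : Type*} [Field K]
    (A B C D G : ℤ → K) (hD : ∀ n, D n ≠ 0)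
    (ρ : ℤ → K) (hρ : ∀ n, ρ n = -G n / D n)
    (θ : ℕ → ℤ → K) (hθ0 : ∀ n, θ 0 n = 1)
    (hθ1 : ∀ n, θ 1 n = -(B n * ρ (n + 1) + C n) / D n)
    (hθ : ∀ (j : ℕ) (n : ℤ), θ (j + 2) n =
      -(1 / D n) *
        (A n * ρ (n + 1) * ρ (n + 2) *
            ∑ i ∈ Finset.range (j + 1), ∑ k ∈ Finset.range (j - i + 1),
              θ i (n + 2) * θ k (n + 1) * θ (j - i - k) n
          + B n * ρ (n + 1) *
            ∑ i ∈ Finset.range (j + 2), θ i (n + 1) * θ (j + 1 - i) n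
          + C n * θ (j + 1) n))
    (Θ : ℤ → PowerSeries K)
    (hΘ : ∀ n, Θ n = PowerSeries.mk fun k => if k = 0 then 0 else ρ n * θ (k - 1) n) :
    ∀ n : ℤ, PowerSeries.C (A n) * Θ (n + 2) * Θ (n + 1) * Θ n
      + PowerSeries.C (B n) * Θ (n + 1) * Θ n
      + (PowerSeries.X * PowerSeries.C (C n) + PowerSeries.C (D n)) * Θ n
      + PowerSeries.X * PowerSeries.C (G n) = 0 := by
  intro n
  have hΘ_eq (m : ℤ) : Θ m = X * PowerSeries.C (ρ m) * mk (θ · m) := by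
    rw [hΘ, mk_if_eq_zero_eq_X_mul (fun k => ρ m * θ k m), mul_assoc]
    congr 1
    ext
    simp
  have hG : G n = -(ρ n * D n) := by rw [hρ, div_mul_cancel₀ _ (hD n), neg_neg]
  have hreduced := C_mul_mk_add_X_mul_eq_C (A n * ρ (n + 1) * ρ (n + 2)) (B n * ρ (n + 1))
    (C n) (D n) (θ · (n + 2)) (θ · (n + 1)) (θ · n)
    (by simp [hθ0]) (by simp only [hθ1, hθ0]; field_simp [hD n]; ring)
    (fun j => by rw [hθ]; field_simp [hD n]; ring)
  rw [hΘ_eq, hΘ_eq, hΘ_eq, hG]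
  simp only [map_mul, map_neg] at hreduced ⊢
  linear_combination X * PowerSeries.C (ρ n) * hreduced

/-- Let `K` be a field of characteristic zero, `A, B, C, D, G : ℤ → K` with `D` nowhere
zero. With `ρ(n) = −G(n)/D(n)`, `θ₀(n) = 1`, `θ₁(n) = −(B(n)ρ(n+1) + C(n))/D(n)` and
`θ_{j+2}(n) = −(1/D(n))[A(n)ρ(n+1)ρ(n+2) Σ_{i+k+l=j} θ_i(n+2)θ_k(n+1)θ_l(n)`
` + B(n)ρ(n+1) Σ_{i=0}^{j+1} θ_i(n+1)θ_{j+1−i}(n) + C(n)θ_{j+1}(n)]`,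
the formal power series `θ(n) = ε·ρ(n)·(1 + Σ_{j≥1} θ_j(n) ε^j) ∈ K⟦ε⟧` satisfies the
third-order discrete Riccati equation
`A(n)·θ(n+2)·θ(n+1)·θ(n) + B(n)·θ(n+1)·θ(n) + (ε·C(n) + D(n))·θ(n) + ε·G(n) = 0`. -/
theorem statement3 {K : Type*} [Field K] [CharZero K]
    (A B C D G : ℤ → K) (hD : ∀ n, D n ≠ 0)
    (ρ : ℤ → K) (hρ : ∀ n, ρ n = -G n / D n)
    (θ : ℕ → ℤ → K) (hθ0 : ∀ n, θ 0 n = 1)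
    (hθ1 : ∀ n, θ 1 n = -(B n * ρ (n + 1) + C n) / D n)
    (hθ : ∀ (j : ℕ) (n : ℤ), θ (j + 2) n =
      -(1 / D n) *
        (A n * ρ (n + 1) * ρ (n + 2) *
            ∑ i ∈ Finset.range (j + 1), ∑ k ∈ Finset.range (j - i + 1),
              θ i (n + 2) * θ k (n + 1) * θ (j - i - k) n
          + B n * ρ (n + 1) *
            ∑ i ∈ Finset.range (j + 2), θ i (n + 1) * θ (j + 1 - i) n
          + C n * θ (j + 1) n))
    (Θ : ℤ → PowerSeries K)
    (hΘ : ∀ n, Θ n = PowerSeries.mk fun k => if k = 0 then 0 else ρ n * θ (k - 1) n) :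
    ∀ n : ℤ, PowerSeries.C (A n) * Θ (n + 2) * Θ (n + 1) * Θ n
      + PowerSeries.C (B n) * Θ (n + 1) * Θ n
      + (PowerSeries.X * PowerSeries.C (C n) + PowerSeries.C (D n)) * Θ n
      + PowerSeries.X * PowerSeries.C (G n) = 0 :=
  statement3_general A B C D G hD ρ hρ θ hθ0 hθ1 hθ Θ hΘ
end

section
/- Let K be a field of characteristic zero. Let ρ, ω, σ : ℤ×ℤ → K with ρ and ω nowhere zero, and let θ_j : ℤ×ℤ → K for j ≥ 1. For each (n,m) define θ(n,m) := ε·ρ(n,m)·(1 + Σ_{j≥1} θ_j(n,m) ε^j) ∈ K⟦ε⟧ and η(n,m) := ω(n,m)·(1 + σ(n,m)·θ(n,m)). Suppose the formal conservation law holds: θ(n,m+1)·η(n,m) = η(n+1,m)·θ(n,m) in K⟦ε⟧ for all (n,m). Then: (a) ρ(n,m+1)·ω(n,m) = ω(n+1,m)·ρ(n,m) for all (n,m); and (b) for every s ≥ 1 and all (n,m), h_s(θ₁,…,θ_s)(n,m+1) − h_s(θ₁,…,θ_s)(n,m) = h_s(v, vθ₁, …, vθ_{s−1})(n+1,m) −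 h_s(v, vθ₁, …, vθ_{s−1})(n,m), where v := σρ. -/
/-!
Write `θ = ε ρ U` with `U = 1 + Σ θ_j ε^j` and `η = ω W` with `W = 1 + σρ ε U`. The coefficient
of `ε` in the conservation law is (a); cancelling the common factor `ρ(n,m+1) ω(n,m) ε` then
leaves `U(n,m+1) W(n,m) = W(n+1,m) U(n,m)`. Taking formal logarithms turns this into an additive
identity, and (b) follows because, by the multinomial theorem, the `s`-th coefficient of
`log f` is `h_s` of the coefficients of `f`.
-/

open Finset

/-- `hpoly j t` is `h_j(t) = Σ_{‖α‖=j} (−1)^{|α|−1}(|α|−1)! t^α/α!`, the sum running over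
finitely supported multi-indices `α = (α₁, α₂, …)` with `‖α‖ = Σ_i i·α_i = j`; any such
multi-index has `α_i ≤ j` and `α_i = 0` for `i > j`, so it is encoded as `α : Fin j → ℕ`
with values in `{0, …, j}` (index `i : Fin j` corresponding to `α_{i+1}`).
`h_j` depends only on the first `j` entries `t 1, …, t j` of `t`. -/
noncomputable def hpoly {K : Type*} [CommRing K] [Algebra ℚ K] (j : ℕ) (t : ℕ → K) : K :=
  ∑ α ∈ (Fintype.piFinset fun _ : Fin j => Finset.range (j + 1)).filter
      (fun α => ∑ i, (i.1 + 1) * α i = j),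
    ((-1 : ℚ) ^ ((∑ i, α i) - 1) * ((∑ i, α i) - 1).factorial / ∏ i, (α i).factorial) •
      ∏ i, t (i.1 + 1) ^ α i

namespace PowerSeries

theorem hasSubst_sub_one {R : Type*} [CommRing R] {f : R⟦X⟧} (hf : constantCoeff f = 1) :
    HasSubst (f - 1) :=
  HasSubst.of_constantCoeff_zero' (by simp [hf])

theorem coeff_pow_eq_zero_of_lt {R : Type*} [CommSemiring R] {φ : R⟦X⟧}
    (hφ : constantCoeff φ = 0) {n k : ℕ} (hnk : n < k) : coeff n (φ ^ k) = 0 :=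
  coeff_of_lt_order n ((Nat.cast_lt.2 hnk).trans_le (le_order_pow_of_constantCoeff_eq_zero k hφ))

section LogOf

variable {A : Type*} [CommRing A] [Algebra ℚ A]

theorem one_add_X_mul_derivative_log : (1 + X) * d⁄dX A (log A) = 1 := by
  ext n
  rw [deriv_log, add_mul, one_mul, map_add, coeff_one]
  cases n with
  | zero => simp
  | succ n => simp [pow_succ]

theorem mul_derivative_logOf {f : A⟦X⟧} (hf : constantCoeff f = 1) :
    f * d⁄dX A (logOf f) = d⁄dX A f := by
  have h := congrArg (substAlgHom (hasSubst_sub_one hf)) (one_add_X_mul_derivative_log (A := A))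
  rw [map_mul, map_add, map_one, substAlgHom_X, add_sub_cancel, coe_substAlgHom] at h
  rw [logOf_eq, derivative_subst (hasSubst_sub_one hf), ← mul_assoc, h, one_mul, map_sub,
    Derivation.map_one_eq_zero, sub_zero]

theorem logOf_mul {f g : A⟦X⟧} (hf : constantCoeff f = 1) (hg : constantCoeff g = 1) :
    logOf (f * g) = logOf f + logOf g := by
  have hfg : constantCoeff (f * g) = 1 := by rw [map_mul, hf, hg, one_mul]
  have := IsAddTorsionFree.of_module_rat A
  refine derivative.ext ?_ (by rw [map_add, constantCoeff_logOf hf, constantCoeff_logOf hg,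
    constantCoeff_logOf hfg, add_zero])
  refine (isUnit_iff_constantCoeff.2 (hfg ▸ isUnit_one)).mul_left_cancel ?_
  rw [mul_derivative_logOf hfg, map_add, mul_add, Derivation.leibniz, smul_eq_mul, smul_eq_mul,
    ← mul_derivative_logOf hf, ← mul_derivative_logOf hg]
  ring

theorem coeff_logOf {f : A⟦X⟧} (hf : constantCoeff f = 1) (n : ℕ) :
    coeff n (logOf f) = ∑ k ∈ Icc 1 n, ((-1 : ℚ) ^ (k + 1) / k) • coeff n ((f - 1) ^ k) := by
  have hsupp : (fun k ↦ coeff k (log A) • coeff n ((f - 1) ^ k)).support ⊆ Icc 1 n := by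
    intro k hk
    by_contra hkn
    rcases Nat.eq_zero_or_pos k with rfl | hk0
    · simp at hk
    · exact hk (by
        simp only [coeff_pow_eq_zero_of_lt (by simp [hf] : constantCoeff (f - 1) = 0)
          (by simp at hkn; omega : n < k), smul_zero])
  rw [logOf_eq, coeff_subst' (hasSubst_sub_one hf), finsum_eq_sum_of_support_subset _ hsupp]
  refine sum_congr rfl fun k hk ↦ ?_
  rw [coeff_log, if_neg (by simp at hk; omega), smul_eq_mul, ← Algebra.smul_def]

end LogOf

theorem coeff_sum_C_mul_X_pow_pow {R ι : Type*} [CommSemiring R] [Fintype ι] [DecidableEq ι]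
    (c : ι → R) (w : ι → ℕ) (k n : ℕ) :
    coeff n ((∑ i, C (c i) * X ^ w i) ^ k) =
      ∑ α ∈ (piAntidiag univ k).filter (fun α ↦ ∑ i, w i * α i = n),
        (Nat.multinomial univ α : R) * ∏ i, c i ^ α i := by
  have hmonomial : ∀ α : ι → ℕ, ∏ i, (C (c i) * X ^ w i) ^ α i
      = C (∏ i, c i ^ α i) * X ^ (∑ i, w i * α i) := by
    intro α
    simp only [mul_pow, prod_mul_distrib, map_prod, map_pow, ← pow_mul, prod_pow_eq_pow_sum]
  rw [sum_pow_eq_sum_piAntidiag, map_sum, sum_filter]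
  refine sum_congr rfl fun α _ ↦ ?_
  rw [hmonomial, ← map_natCast (C (R := R)), ← mul_assoc, ← map_mul, coeff_C_mul_X_pow]
  simp only [eq_comm]

theorem coeff_pow_eq_coeff_trunc_pow {R : Type*} [CommSemiring R] (f : R⟦X⟧) (n k : ℕ) :
    coeff n (f ^ k) = coeff n ((trunc (n + 1) f : R⟦X⟧) ^ k) := by
  have h := congrArg (Polynomial.coeff · n) (trunc_trunc_pow f (n + 1) k)
  simp only [coeff_trunc, if_pos n.lt_succ_self] at h
  exact h.symm

theorem coe_trunc_succ_sub_one {R : Type*} [CommRing R] {f : R⟦X⟧} (hf : constantCoeff f = 1)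
    (n : ℕ) :
    (trunc (n + 1) (f - 1) : R⟦X⟧) = ∑ i : Fin n, C (coeff (i.1 + 1) f) * X ^ (i.1 + 1) := by
  rw [trunc_apply, ← Polynomial.coeToPowerSeries.ringHom_apply, map_sum, ← range_eq_Ico,
    sum_range_succ', Fin.sum_univ_eq_sum_range (fun i ↦ C (coeff (i + 1) f) * X ^ (i + 1))]
  simp [hf, monomial_eq_C_mul_X_pow]

theorem eq_and_eq_of_C_mul_X_mul_eq {R : Type*} [CommRing R] [IsDomain R] {c c' : R}
    {u u' : R⟦X⟧} (hc : c ≠ 0) (hu : constantCoeff u = 1) (hu' : constantCoeff u' = 1)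
    (h : C c * (X * u) = C c' * (X * u')) : c = c' ∧ u = u' := by
  have hcc' : c = c' := by
    simpa [coeff_C_mul, hu, hu'] using congrArg (coeff 1) h
  subst hcc'
  have hC : C c ≠ 0 := (map_ne_zero_iff C C_injective).2 hc
  exact ⟨rfl, mul_left_cancel₀ X_ne_zero (mul_left_cancel₀ hC h)⟩

theorem coeff_one_add_C_mul_X_mul {R : Type*} [CommRing R] (c : R) (u : R⟦X⟧) {i : ℕ}
    (hi : i ≠ 0) : coeff i (1 + C c * (X * u)) = c * coeff (i - 1) u := by
  obtain ⟨j, rfl⟩ := Nat.exists_eq_succ_of_ne_zero hi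
  simp [coeff_one, coeff_C_mul]

end PowerSeries

open PowerSeries

theorem Nat.multinomial_div_sum {ι : Type*} (s : Finset ι) (f : ι → ℕ) (h : 0 < ∑ i ∈ s, f i) :
    (multinomial s f : ℚ) / (∑ i ∈ s, f i : ℕ) =
      (∑ i ∈ s, f i - 1).factorial / ∏ i ∈ s, ((f i).factorial : ℚ) := by
  have hspec : (∏ i ∈ s, ((f i).factorial : ℚ)) * multinomial s f = (∑ i ∈ s, f i).factorial := by
    exact_mod_cast multinomial_spec s f
  have hfact : ((∑ i ∈ s, f i).factorial : ℚ) =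
      (∑ i ∈ s, f i : ℕ) * (∑ i ∈ s, f i - 1).factorial := by
    exact_mod_cast (mul_factorial_pred h.ne').symm
  have hprod : (∏ i ∈ s, ((f i).factorial : ℚ)) ≠ 0 := prod_ne_zero_iff.2 fun i _ ↦ by positivity
  rw [div_eq_div_iff (by positivity) hprod, mul_comm, hspec, hfact, mul_comm]

section Hpoly

variable {A : Type*} [CommRing A] [Algebra ℚ A]

theorem hpoly_congr {j : ℕ} {t u : ℕ → A} (h : ∀ i, 1 ≤ i → i ≤ j → t i = u i) :
    hpoly j t = hpoly j u := by
  unfold hpoly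
  refine sum_congr rfl fun α _ ↦ ?_
  congr 1
  refine prod_congr rfl fun i _ ↦ ?_
  rw [h (i.1 + 1) (by omega) (by omega)]

theorem hpoly_eq_sum_Icc {j : ℕ} (hj : 1 ≤ j) (t : ℕ → A) :
    hpoly j t = ∑ k ∈ Icc 1 j, ∑ α ∈ (piAntidiag univ k).filter
        (fun α : Fin j → ℕ ↦ ∑ i, (i.1 + 1) * α i = j),
      ((-1 : ℚ) ^ (k - 1) * (k - 1).factorial / ∏ i, (α i).factorial) • ∏ i, t (i.1 + 1) ^ α i := by
  have hweight : ∀ α : Fin j → ℕ, ∀ i, α i ≤ ∑ i, (i.1 + 1) * α i := fun α i ↦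
    (Nat.le_mul_of_pos_left _ i.1.succ_pos).trans
      (single_le_sum (f := fun i : Fin j ↦ (i.1 + 1) * α i) (fun _ _ ↦ Nat.zero_le _) (mem_univ i))
  have hmaps : ∀ α ∈ (Fintype.piFinset fun _ : Fin j ↦ range (j + 1)).filter
      (fun α ↦ ∑ i, (i.1 + 1) * α i = j), ∑ i, α i ∈ Icc 1 j := by
    intro α hα
    have hw : ∑ i, (i.1 + 1) * α i = j := (mem_filter.1 hα).2
    refine mem_Icc.2 ⟨Nat.one_le_iff_ne_zero.2 fun h0 ↦ ?_, ?_⟩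
    · have hα0 : ∀ i, α i = 0 := fun i ↦ sum_eq_zero_iff.1 h0 i (mem_univ i)
      simp only [hα0, mul_zero, sum_const_zero] at hw
      omega
    · calc ∑ i, α i ≤ ∑ i : Fin j, (i.1 + 1) * α i :=
            sum_le_sum fun i _ ↦ Nat.le_mul_of_pos_left (α i) i.1.succ_pos
        _ = j := hw
  rw [hpoly, ← sum_fiberwise_of_maps_to hmaps]
  refine sum_congr rfl fun k _ ↦ ?_
  have hfiber : ((Fintype.piFinset fun _ : Fin j ↦ range (j + 1)).filter
        (fun α ↦ ∑ i, (i.1 + 1) * α i = j)).filter (fun α ↦ ∑ i, α i = k)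
      = (piAntidiag univ k).filter (fun α : Fin j → ℕ ↦ ∑ i, (i.1 + 1) * α i = j) := by
    ext α
    simp only [mem_filter, Fintype.mem_piFinset, mem_range, mem_piAntidiag, mem_univ,
      ne_eq, imp_true_iff, and_true]
    constructor
    · rintro ⟨⟨-, hw⟩, hk⟩
      exact ⟨hk, hw⟩
    · rintro ⟨hk, hw⟩
      exact ⟨⟨fun i ↦ Nat.lt_succ_of_le (hw ▸ hweight α i), hw⟩, hk⟩
  rw [hfiber]
  refine sum_congr rfl fun α hα ↦ ?_
  rw [(mem_piAntidiag.1 (mem_filter.1 hα).1).1]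

theorem hpoly_eq_coeff_logOf {f : A⟦X⟧} (hf : constantCoeff f = 1) {s : ℕ} (hs : 1 ≤ s) :
    hpoly s (fun i ↦ coeff i f) = coeff s (logOf f) := by
  rw [hpoly_eq_sum_Icc hs, coeff_logOf hf]
  refine sum_congr rfl fun k hk ↦ ?_
  have hk1 : 1 ≤ k := (mem_Icc.1 hk).1
  rw [coeff_pow_eq_coeff_trunc_pow, coe_trunc_succ_sub_one hf, coeff_sum_C_mul_X_pow_pow,
    smul_sum]
  refine sum_congr rfl fun α hα ↦ ?_
  have hαk : ∑ i, α i = k := (mem_piAntidiag.1 (mem_filter.1 hα).1).1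
  rw [← nsmul_eq_mul, ← Nat.cast_smul_eq_nsmul ℚ, smul_smul]
  congr 1
  rw [div_mul_comm, ← hαk, Nat.multinomial_div_sum _ _ (hαk ▸ hk1), hαk,
    show k + 1 = k - 1 + 2 by omega, pow_add]
  push_cast
  ring

theorem hpoly_sub_hpoly_eq_of_mul_eq {f f' g g' : A⟦X⟧} (hf : constantCoeff f = 1)
    (hf' : constantCoeff f' = 1) (hg : constantCoeff g = 1) (hg' : constantCoeff g' = 1)
    (h : f' * g = g' * f) {s : ℕ} (hs : 1 ≤ s) :
    hpoly s (fun i ↦ coeff i f') - hpoly s (fun i ↦ coeff i f)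
      = hpoly s (fun i ↦ coeff i g') - hpoly s (fun i ↦ coeff i g) := by
  have hlog := congrArg (fun F ↦ coeff s (logOf F)) h
  simp only [logOf_mul hf' hg, logOf_mul hg' hf, map_add] at hlog
  simp only [hpoly_eq_coeff_logOf hf hs, hpoly_eq_coeff_logOf hf' hs, hpoly_eq_coeff_logOf hg hs,
    hpoly_eq_coeff_logOf hg' hs]
  linear_combination hlog

end Hpoly

/-- Let `K` be a field of characteristic zero, `ρ, ω, σ` functions on `ℤ×ℤ` with `ρ, ω`
nowhere zero, and `θ_j` (j ≥ 1) functions on `ℤ×ℤ`. Set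
`θ(n,m) = ε·ρ(n,m)(1 + Σ_{j≥1} θ_j(n,m) ε^j) ∈ K⟦ε⟧` and `η(n,m) = ω(n,m)(1 + σ(n,m)θ(n,m))`.
If the formal conservation law `θ(n,m+1)·η(n,m) = η(n+1,m)·θ(n,m)` holds in `K⟦ε⟧`, then
(a) `ρ(n,m+1)ω(n,m) = ω(n+1,m)ρ(n,m)`, and (b) for every `s ≥ 1`,
`Δ_m h_s(θ₁,…,θ_s) = Δ_n h_s(v, vθ₁, …, vθ_{s−1})` pointwise, where `v = σρ`. -/
theorem statement4 {K : Type*} [Field K] [CharZero K]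
    (ρ ω σ : ℤ → ℤ → K) (hρ : ∀ n m, ρ n m ≠ 0) (hω : ∀ n m, ω n m ≠ 0)
    (θ : ℕ → ℤ → ℤ → K) (hθ0 : ∀ n m, θ 0 n m = 1)
    (Θ : ℤ → ℤ → PowerSeries K)
    (hΘ : ∀ n m, Θ n m = PowerSeries.mk fun k => if k = 0 then 0 else ρ n m * θ (k - 1) n m)
    (η : ℤ → ℤ → PowerSeries K)
    (hη : ∀ n m, η n m =
      PowerSeries.C (ω n m) * (1 + PowerSeries.C (σ n m) * Θ n m))
    (hcons : ∀ n m : ℤ, Θ n (m + 1) * η n m = η (n + 1) m * Θ n m) :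
    (∀ n m : ℤ, ρ n (m + 1) * ω n m = ω (n + 1) m * ρ n m) ∧
    (∀ s : ℕ, 1 ≤ s → ∀ n m : ℤ,
      hpoly s (fun i => θ i n (m + 1)) - hpoly s (fun i => θ i n m)
        = hpoly s (fun i => σ (n + 1) m * ρ (n + 1) m * θ (i - 1) (n + 1) m)
          - hpoly s (fun i => σ n m * ρ n m * θ (i - 1) n m)) := by
  set U : ℤ → ℤ → K⟦X⟧ := fun n m ↦ mk fun k ↦ θ k n m
  have hU : ∀ n m, constantCoeff (U n m) = 1 := fun n m ↦ by
    simp [U, ← coeff_zero_eq_constantCoeff_apply, hθ0]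
  have hΘU : ∀ n m, Θ n m = C (ρ n m) * (X * U n m) := fun n m ↦ by
    ext (_ | k) <;> simp [hΘ, U, coeff_C_mul]
  set W : ℤ → ℤ → K⟦X⟧ := fun n m ↦ 1 + C (σ n m * ρ n m) * (X * U n m)
  have hW : ∀ n m, constantCoeff (W n m) = 1 := fun n m ↦ by simp [W]
  have hsplit : ∀ n m, ρ n (m + 1) * ω n m = ω (n + 1) m * ρ n m ∧
      U n (m + 1) * W n m = W (n + 1) m * U n m := fun n m ↦ by
    refine eq_and_eq_of_C_mul_X_mul_eq (mul_ne_zero (hρ _ _) (hω _ _)) (by simp [hU, hW])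
      (by simp [hU, hW]) ?_
    have h := hcons n m
    simp only [hη, hΘU, W, map_mul] at h ⊢
    linear_combination h
  refine ⟨fun n m ↦ (hsplit n m).1, fun s hs n m ↦ ?_⟩
  convert hpoly_sub_hpoly_eq_of_mul_eq (hU n m) (hU n (m + 1)) (hW n m) (hW (n + 1) m)
    (hsplit n m).2 hs using 2 <;> refine hpoly_congr fun i hi _ ↦ ?_
  all_goals
    simp only [U, W, coeff_one_add_C_mul_X_mul _ _ (Nat.one_le_iff_ne_zero.1 hi), coeff_mk]
end

section
/- Let K be a field, p, q, α, β ∈ K, and let u : ℤ×ℤ → K satisfy the NQC equation [(p−α)u−(p+β)ũ][(p−β)û−(p+α)ũ̂] − [(q−α)u−(q+β)û][(q−β)ũ−(q+α)ũ̂] = 0 at every (n,m). Set P₊ = (p+α)(p+β), P₋ = (p−α)(p−β), Q₊ = (q+α)(q+β), and assume P₋u − P₊ũ̃ and P₊ũ − Q₊û + (q²−p²)u are nowhere zero. Then at every (n,m): Δ_m[ ((α²+β²−2p²)ũũ̃ + P₋ũ² + P₊ũ̃²) / ((P₋u − P₊ũ̃)(P₋ũ − P₊ũ̃̃)) ] =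 Δ_n[ ((α²+β²−2p²)uũ + P₋u² + P₊ũ²) / ((P₊ũ − Q₊û + (q²−p²)u)(P₋u − P₊ũ̃)) ]. -/
/-! The NQC equation is linear in `ũ̂`, with coefficient `M = P₊ũ − Q₊û + (q²−p²)u`; its
factored forms give, on each quad, `M · (P₋u + (q²−p²)ũ − Q₊ũ̂) = (q²−p²) N(u, ũ)`, and, on
adjacent quads, that `D` and `N` acquire the same factors `S` under the shift in `m`, so that
`F̂ = N(u, ũ) M̃̃ / (M D D̃)`. Since `P₋u + (q²−p²)ũ − Q₊ũ̂ = D + M̃`, the conservation law then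
reduces to `N(ũ, ũ̃) M (D + M̃) = N(u, ũ) M̃ (D̃ + M̃̃)`, the first identity at `n` and `n + 1`. -/

namespace NQC

section CommRing

variable {R : Type*} [CommRing R]

/-- With `u = x`, `ũ = y`, `û = z`, `ũ̂ = w`: `quad` is the NQC expression, `M x y z` is
`P₊ũ − Q₊û + (q²−p²)u`, `D x z` is `P₋u − P₊ũ̃` (so `z = ũ̃`) and `N x y` is the numerator of
the conserved density; `top` and `right` in lemma names refer to the edges `(z, w)` and `(y, w)`. -/
def quad (p q α β x y z w : R) : R :=
  ((p - α) * x - (p + β) * y) * ((p - β) * z - (p + α) * w)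
    - ((q - α) * x - (q + β) * z) * ((q - β) * y - (q + α) * w)

def lin (p α β x y : R) : R := (p - α) * x - (p + β) * y

def M (p q α β x y z : R) : R :=
  (p + α) * (p + β) * y - (q + α) * (q + β) * z + (q ^ 2 - p ^ 2) * x

def D (p α β x z : R) : R := (p - α) * (p - β) * x - (p + α) * (p + β) * z

def N (p α β x y : R) : R :=
  (α ^ 2 + β ^ 2 - 2 * p ^ 2) * x * y + (p - α) * (p - β) * x ^ 2 + (p + α) * (p + β) * y ^ 2

def G (p q α β x y w : R) : R :=
  (p - α) * (p - β) * x + (q ^ 2 - p ^ 2) * y - (q + α) * (q + β) * w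

def cross (p q α β z y : R) : R := (p - β) * (q + α) * z - (p + α) * (q - β) * y

def S (p q α β z y : R) : R := cross p q α β z y * cross p q β α z y

variable {p q α β x y z w : R}

theorem quad_eq_M_mul_sub :
    quad p q α β x y z w =
      M p q α β x y z * w - ((q - α) * (q - β) * x * y - (p - α) * (p - β) * x * z
        + (p ^ 2 - q ^ 2) * y * z) := by
  unfold quad M; ring

theorem quad_comm : quad p q β α x y z w = quad p q α β x y z w := by
  rw [quad_eq_M_mul_sub, quad_eq_M_mul_sub]; unfold M; ring

theorem M_comm : M p q β α x y z = M p q α β x y z := by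
  unfold M; ring

theorem N_eq_lin_mul_lin : N p α β x y = lin p α β x y * lin p β α x y := by
  unfold N lin; ring

theorem lin_top_mul_M (h : quad p q α β x y z w = 0) :
    lin p β α z w * M p q α β x y z = lin q α β x z * cross p q α β z y := by
  unfold quad at h; unfold lin M cross; linear_combination (-(p + α)) * h

theorem lin_top_mul_M' (h : quad p q α β x y z w = 0) :
    lin p α β z w * M p q α β x y z = lin q β α x z * cross p q β α z y := by
  rw [← M_comm]; exact lin_top_mul_M (quad_comm.trans h)

theorem lin_right_mul_M (h : quad p q α β x y z w = 0) :
    lin q β α y w * M p q α β x y z = lin p α β x y * cross p q α β z y := by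
  unfold quad at h; unfold lin M cross; linear_combination (-(q + α)) * h

theorem lin_right_mul_M' (h : quad p q α β x y z w = 0) :
    lin q α β y w * M p q α β x y z = lin p β α x y * cross p q β α z y := by
  rw [← M_comm]; exact lin_right_mul_M (quad_comm.trans h)

theorem N_top_mul_M_sq (h : quad p q α β x y z w = 0) :
    N p α β z w * M p q α β x y z ^ 2 = N q α β x z * S p q α β z y := by
  rw [N_eq_lin_mul_lin, N_eq_lin_mul_lin]; unfold S
  linear_combination (lin p α β z w * M p q α β x y z) * lin_top_mul_M h
    + (lin q α β x z * cross p q α β z y) * lin_top_mul_M' h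

theorem N_right_mul_M_sq (h : quad p q α β x y z w = 0) :
    N q α β y w * M p q α β x y z ^ 2 = N p α β x y * S p q α β z y := by
  rw [N_eq_lin_mul_lin, N_eq_lin_mul_lin]; unfold S
  linear_combination (lin q α β y w * M p q α β x y z) * lin_right_mul_M h
    + (lin p α β x y * cross p q α β z y) * lin_right_mul_M' h

theorem M_mul_G (h : quad p q α β x y z w = 0) :
    M p q α β x y z * G p q α β x y w = (q ^ 2 - p ^ 2) * N p α β x y := by
  unfold quad at h; unfold M G N; linear_combination (-(q + α) * (q + β)) * h

theorem G_eq_D_add_M (v : R) : G p q α β x y w = D p α β x v + M p q α β y v w := by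
  unfold G D M; ring

theorem D_top_mul_M_mul_M {x₀ x₁ x₂ z₀ z₁ z₂ : R}
    (h₀ : quad p q α β x₀ x₁ z₀ z₁ = 0) (h₁ : quad p q α β x₁ x₂ z₁ z₂ = 0) :
    D p α β z₀ z₂ * M p q α β x₀ x₁ z₀ * M p q α β x₁ x₂ z₁ =
      S p q α β z₀ x₁ * D p α β x₀ x₂ := by
  have hD_split : D p α β z₀ z₂ = (p - α) * lin p β α z₀ z₁ + (p + α) * lin p α β z₁ z₂ := by
    unfold D lin; ring
  have key : (p - α) * lin q α β x₀ z₀ * M p q α β x₁ x₂ z₁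
      + (p + α) * lin p α β x₀ x₁ * cross p q β α z₁ x₂
      = cross p q β α z₀ x₁ * D p α β x₀ x₂ := by
    unfold quad at h₀; unfold lin M cross D
    linear_combination (-(p - α) * (q + β)) * h₀
  unfold S
  linear_combination (M p q α β x₀ x₁ z₀ * M p q α β x₁ x₂ z₁) * hD_split
    + ((p - α) * M p q α β x₁ x₂ z₁) * lin_top_mul_M h₀
    + ((p + α) * M p q α β x₀ x₁ z₀) * lin_top_mul_M' h₁
    + ((p + α) * cross p q β α z₁ x₂) * lin_right_mul_M h₀
    + cross p q α β z₀ x₁ * key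

end CommRing

section Field

variable {K : Type*} [Field K] {p q α β : K} {x₀ x₁ x₂ x₃ z₀ z₁ z₂ z₃ : K}

theorem N_top_div_D_mul_D
    (h₀ : quad p q α β x₀ x₁ z₀ z₁ = 0) (h₁ : quad p q α β x₁ x₂ z₁ z₂ = 0)
    (h₂ : quad p q α β x₂ x₃ z₂ z₃ = 0)
    (hM₀ : M p q α β x₀ x₁ z₀ ≠ 0) (hM₁ : M p q α β x₁ x₂ z₁ ≠ 0)
    (hD₀ : D p α β x₀ x₂ ≠ 0) (hD₁ : D p α β x₁ x₃ ≠ 0)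
    (hD₀' : D p α β z₀ z₂ ≠ 0) (hD₁' : D p α β z₁ z₃ ≠ 0) :
    N p α β z₁ z₂ / (D p α β z₀ z₂ * D p α β z₁ z₃) =
      N p α β x₀ x₁ * M p q α β x₂ x₃ z₂ /
        (M p q α β x₀ x₁ z₀ * D p α β x₀ x₂ * D p α β x₁ x₃) := by
  rw [div_eq_div_iff (mul_ne_zero hD₀' hD₁') (mul_ne_zero (mul_ne_zero hM₀ hD₀) hD₁)]
  refine mul_right_cancel₀ (mul_ne_zero hM₀ (pow_ne_zero 2 hM₁)) ?_
  have hN : N p α β z₁ z₂ * (M p q α β x₀ x₁ z₀ ^ 2 * M p q α β x₁ x₂ z₁ ^ 2) =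
      N p α β x₀ x₁ * S p q α β z₀ x₁ * S p q α β z₁ x₂ := by
    linear_combination M p q α β x₀ x₁ z₀ ^ 2 * N_top_mul_M_sq h₁
      + S p q α β z₁ x₂ * N_right_mul_M_sq h₀
  linear_combination (D p α β x₀ x₂ * D p α β x₁ x₃) * hN
    - (N p α β x₀ x₁ * D p α β z₁ z₃ * M p q α β x₁ x₂ z₁ * M p q α β x₂ x₃ z₂) *
      D_top_mul_M_mul_M h₀ h₁
    - (N p α β x₀ x₁ * S p q α β z₀ x₁ * D p α β x₀ x₂) * D_top_mul_M_mul_M h₁ h₂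

theorem conservation_law
    (h₀ : quad p q α β x₀ x₁ z₀ z₁ = 0) (h₁ : quad p q α β x₁ x₂ z₁ z₂ = 0)
    (h₂ : quad p q α β x₂ x₃ z₂ z₃ = 0)
    (hM₀ : M p q α β x₀ x₁ z₀ ≠ 0) (hM₁ : M p q α β x₁ x₂ z₁ ≠ 0)
    (hD₀ : D p α β x₀ x₂ ≠ 0) (hD₁ : D p α β x₁ x₃ ≠ 0)
    (hD₀' : D p α β z₀ z₂ ≠ 0) (hD₁' : D p α β z₁ z₃ ≠ 0) :
    N p α β z₁ z₂ / (D p α β z₀ z₂ * D p α β z₁ z₃)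
        - N p α β x₁ x₂ / (D p α β x₀ x₂ * D p α β x₁ x₃) =
      N p α β x₁ x₂ / (M p q α β x₁ x₂ z₁ * D p α β x₁ x₃)
        - N p α β x₀ x₁ / (M p q α β x₀ x₁ z₀ * D p α β x₀ x₂) := by
  have hG : N p α β x₁ x₂ * M p q α β x₀ x₁ z₀ * G p q α β x₀ x₁ z₁ =
      N p α β x₀ x₁ * M p q α β x₁ x₂ z₁ * G p q α β x₁ x₂ z₂ := by
    linear_combination N p α β x₁ x₂ * M_mul_G h₀ - N p α β x₀ x₁ * M_mul_G h₁
  rw [G_eq_D_add_M x₂, G_eq_D_add_M x₃] at hG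
  rw [N_top_div_D_mul_D h₀ h₁ h₂ hM₀ hM₁ hD₀ hD₁ hD₀' hD₁']
  field_simp
  linear_combination -hG

end Field

end NQC

/-- Second (four-point) conservation law of the NQC equation:
`Δ_m[((α²+β²−2p²)ũũ̃ + P₋ũ² + P₊ũ̃²)/((P₋u − P₊ũ̃)(P₋ũ − P₊ũ̃̃))]`
`= Δ_n[((α²+β²−2p²)uũ + P₋u² + P₊ũ²)/((P₊ũ − Q₊û + (q²−p²)u)(P₋u − P₊ũ̃))]`. -/
theorem statement13 {K : Type*} [Field K] (p q α β : K)
    (u : ℤ → ℤ → K)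
    (hNQC : ∀ n m : ℤ,
      ((p - α) * u n m - (p + β) * u (n + 1) m) *
        ((p - β) * u n (m + 1) - (p + α) * u (n + 1) (m + 1))
      - ((q - α) * u n m - (q + β) * u n (m + 1)) *
        ((q - β) * u (n + 1) m - (q + α) * u (n + 1) (m + 1)) = 0)
    (Pp Pm Qp : K)
    (hPp : Pp = (p + α) * (p + β)) (hPm : Pm = (p - α) * (p - β))
    (hQp : Qp = (q + α) * (q + β))
    (hd1 : ∀ n m : ℤ, Pm * u n m - Pp * u (n + 2) m ≠ 0)
    (hd2 : ∀ n m : ℤ,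
      Pp * u (n + 1) m - Qp * u n (m + 1) + (q ^ 2 - p ^ 2) * u n m ≠ 0)
    (F J : ℤ → ℤ → K)
    (hF : ∀ n m, F n m =
      ((α ^ 2 + β ^ 2 - 2 * p ^ 2) * u (n + 1) m * u (n + 2) m
        + Pm * u (n + 1) m ^ 2 + Pp * u (n + 2) m ^ 2) /
      ((Pm * u n m - Pp * u (n + 2) m) * (Pm * u (n + 1) m - Pp * u (n + 3) m)))
    (hJ : ∀ n m, J n m =
      ((α ^ 2 + β ^ 2 - 2 * p ^ 2) * u n m * u (n + 1) m
        + Pm * u n m ^ 2 + Pp * u (n + 1) m ^ 2) /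
      ((Pp * u (n + 1) m - Qp * u n (m + 1) + (q ^ 2 - p ^ 2) * u n m) *
        (Pm * u n m - Pp * u (n + 2) m))) :
    ∀ n m : ℤ, F n (m + 1) - F n m = J (n + 1) m - J n m := by
  intro n m
  subst hPp hPm hQp
  have h₁ := hNQC (n + 1) m
  have h₂ := hNQC (n + 2) m
  have hD₁ := hd1 (n + 1) m
  have hD₁' := hd1 (n + 1) (m + 1)
  have hM₁ := hd2 (n + 1) m
  rw [hF, hF, hJ, hJ]
  simp only [show n + 1 + 1 = n + 2 by ring, show n + 1 + 2 = n + 3 by ring,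
    show n + 2 + 1 = n + 3 by ring] at h₁ h₂ hD₁ hD₁' hM₁ ⊢
  exact NQC.conservation_law (hNQC n m) h₁ h₂ (hd2 n m) hM₁ (hd1 n m) hD₁ (hd1 n (m + 1)) hD₁'
end
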